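/- arXiv:2504.11758 — 2 statements merged into one kernel-verified Lean document; each statement's English description precedes it below -/
import Mathlib

section
/- Let ν ∈ ℝ, let k ≥ 1 be an integer, and let f be a smooth function on (0,∞). Then for every x > 0: (a) δ_ν^k (y ↦ y f(y))(x) = k δ_ν^{k-1} f(x) + x δ_ν^k f(x); and (b) δ_ν^k f(x) = δ_{ν+1}^k f(x) + (k/x) δ_{ν+1}^{k-1} f(x). -/
open MeasureTheory Real Set

/-- Modified Bessel function of the first kind `I_a(z)` (for `z > 0`, `a > -1`). -/
noncomputable def besselI (a z : ℝ) : ℝ :=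
  ∑' m : ℕ, (z / 2) ^ (a + 2 * (m : ℝ)) / ((Nat.factorial m : ℝ) * Real.Gamma (a + (m : ℝ) + 1))

/-- One-dimensional Bessel heat kernel `p_t^ν(x,y)`. -/
noncomputable def heatK (ν t x y : ℝ) : ℝ :=
  Real.sqrt (x * y) / (2 * t) * Real.exp (-(x ^ 2 + y ^ 2) / (4 * t)) *
    besselI ν (x * y / (2 * t))

/-- Bessel derivative `δ_ν f(x) = f'(x) - (ν+1/2) f(x)/x`. -/
noncomputable def bD (ν : ℝ) (f : ℝ → ℝ) : ℝ → ℝ :=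
  fun x => deriv f x - (ν + 1 / 2) * f x / x

/-- `ℓ`-fold iterate `δ_ν^ℓ`. -/
noncomputable def bDIter (ν : ℝ) : ℕ → (ℝ → ℝ) → ℝ → ℝ
  | 0, f => f
  | n + 1, f => bD ν (bDIter ν n f)

lemma bDIter_smooth (ν : ℝ) (f : ℝ → ℝ) (hf : ContDiffOn ℝ (⊤ : ℕ∞) f (Set.Ioi 0)) :
    ∀ n, ContDiffOn ℝ (⊤ : ℕ∞) (bDIter ν n f) (Set.Ioi 0) := by
  intro n
  induction n with
  | zero => exact hf
  | succ n ih =>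
    show ContDiffOn ℝ (⊤ : ℕ∞) (fun x => deriv (bDIter ν n f) x - (ν + 1/2) * bDIter ν n f x / x) _
    have hd : ContDiffOn ℝ (⊤ : ℕ∞) (deriv (bDIter ν n f)) (Set.Ioi 0) :=
      ih.deriv_of_isOpen isOpen_Ioi (by simp)
    exact hd.sub ((contDiffOn_const.mul ih).div contDiffOn_id (fun x hx => ne_of_gt hx))

lemma bDIter_diffAt (ν : ℝ) (f : ℝ → ℝ) (hf : ContDiffOn ℝ (⊤ : ℕ∞) f (Set.Ioi 0)) (n : ℕ)
    {x : ℝ} (hx : 0 < x) : DifferentiableAt ℝ (bDIter ν n f) x :=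
  ((bDIter_smooth ν f hf n).differentiableOn (by simp)).differentiableAt
    (isOpen_Ioi.mem_nhds hx)

lemma bDIter_mul_pred (ν : ℝ) (f : ℝ → ℝ) (k : ℕ) (x : ℝ) :
    (k : ℝ) * (deriv (bDIter ν (k - 1) f) x - (ν + 1/2) * bDIter ν (k - 1) f x / x)
      = (k : ℝ) * bDIter ν k f x := by
  cases k with
  | zero => simp
  | succ n => rfl

lemma bessel_aux (ν : ℝ) (f : ℝ → ℝ) (hf : ContDiffOn ℝ (⊤ : ℕ∞) f (Set.Ioi 0)) :
    ∀ k : ℕ, ∀ x > 0,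
      bDIter ν k (fun y => y * f y) x
          = (k : ℝ) * bDIter ν (k - 1) f x + x * bDIter ν k f x ∧
      bDIter ν k f x
          = bDIter (ν + 1) k f x + (k : ℝ) / x * bDIter (ν + 1) (k - 1) f x := by
  intro k
  induction k with
  | zero => intro x hx; constructor <;> simp [bDIter]
  | succ k ih =>
    intro x hx
    have hxne : x ≠ 0 := ne_of_gt hx
    constructor
    · -- part (a)
      have hg := bDIter_diffAt ν f hf (k - 1) hx
      have hh := bDIter_diffAt ν f hf k hx
      have hev : bDIter ν k (fun y => y * f y)
          =ᶠ[nhds x] fun y => (k : ℝ) * bDIter ν (k - 1) f y + y * bDIter ν k f y :=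
        Filter.eventuallyEq_of_mem (isOpen_Ioi.mem_nhds hx) (fun y hy => (ih y hy).1)
      have H1 : HasDerivAt (fun y => (k : ℝ) * bDIter ν (k - 1) f y + y * bDIter ν k f y)
          ((k : ℝ) * deriv (bDIter ν (k - 1) f) x
            + (1 * bDIter ν k f x + x * deriv (bDIter ν k f) x)) x :=
        (hg.hasDerivAt.const_mul _).add ((hasDerivAt_id x).mul hh.hasDerivAt)
      have hD : deriv (bDIter ν k (fun y => y * f y)) x
          = (k : ℝ) * deriv (bDIter ν (k - 1) f) x
            + (1 * bDIter ν k f x + x * deriv (bDIter ν k f) x) :=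
        (H1.congr_of_eventuallyEq hev).deriv
      have hk1 := bDIter_mul_pred ν f k x
      show deriv (bDIter ν k (fun y => y * f y)) x
          - (ν + 1/2) * bDIter ν k (fun y => y * f y) x / x = _
      rw [hD, (ih x hx).1]
      push_cast
      have h2 : bDIter ν (k + 1 - 1) f x = bDIter ν k f x := by norm_num
      show _ = ((k : ℕ) + 1 : ℝ) * bDIter ν (k + 1 - 1) f x
          + x * (deriv (bDIter ν k f) x - (ν + 1/2) * bDIter ν k f x / x)
      rw [h2]
      field_simp at hk1 ⊢
      linear_combination hk1
    · -- part (b)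
      have hG := bDIter_diffAt (ν + 1) f hf k hx
      have hH := bDIter_diffAt (ν + 1) f hf (k - 1) hx
      have hev : bDIter ν k f
          =ᶠ[nhds x] fun y => bDIter (ν + 1) k f y + (k : ℝ) / y * bDIter (ν + 1) (k - 1) f y :=
        Filter.eventuallyEq_of_mem (isOpen_Ioi.mem_nhds hx) (fun y hy => (ih y hy).2)
      have H2 : HasDerivAt
          (fun y => bDIter (ν + 1) k f y + (k : ℝ) / y * bDIter (ν + 1) (k - 1) f y)
          (deriv (bDIter (ν + 1) k f) x
            + (((k : ℝ) * -(x ^ 2)⁻¹) * bDIter (ν + 1) (k - 1) f x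
              + ((k : ℝ) * x⁻¹) * deriv (bDIter (ν + 1) (k - 1) f) x)) x :=
        hG.hasDerivAt.add (((hasDerivAt_inv hxne).const_mul (k : ℝ)).mul hH.hasDerivAt)
      have hD : deriv (bDIter ν k f) x
          = deriv (bDIter (ν + 1) k f) x
            + (((k : ℝ) * -(x ^ 2)⁻¹) * bDIter (ν + 1) (k - 1) f x
              + ((k : ℝ) * x⁻¹) * deriv (bDIter (ν + 1) (k - 1) f) x) :=
        (H2.congr_of_eventuallyEq hev).deriv
      have hk2 := bDIter_mul_pred (ν + 1) f k x
      show deriv (bDIter ν k f) x - (ν + 1/2) * bDIter ν k f x / x = _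
      rw [hD, (ih x hx).2]
      push_cast
      have h2 : bDIter (ν + 1) (k + 1 - 1) f x = bDIter (ν + 1) k f x := by norm_num
      show _ = (deriv (bDIter (ν + 1) k f) x
            - (ν + 1 + 1/2) * bDIter (ν + 1) k f x / x)
          + ((k : ℕ) + 1 : ℝ) / x * bDIter (ν + 1) (k + 1 - 1) f x
      rw [h2]
      field_simp at hk2 ⊢
      linear_combination hk2

/-- product rule and index-shift identities for iterated Bessel derivatives. -/
theorem bessel_deriv_iter_identities (ν : ℝ) (k : ℕ) (hk : 1 ≤ k) (f : ℝ → ℝ)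
    (hf : ContDiffOn ℝ (⊤ : ℕ∞) f (Set.Ioi 0)) :
    ∀ x > 0,
      bDIter ν k (fun y => y * f y) x
          = (k : ℝ) * bDIter ν (k - 1) f x + x * bDIter ν k f x ∧
      bDIter ν k f x
          = bDIter (ν + 1) k f x + (k : ℝ) / x * bDIter (ν + 1) (k - 1) f x := by
  exact bessel_aux ν f hf k
end

section
/- Let ν > -1/2. There exist constants C, c > 0 (depending only on ν) such that p_t^ν(x,y) ≤ C t^{-1/2} exp(-|x-y|²/(ct)) (1 + √t/x)^{-ν-1/2} (1 + √t/y)^{-ν-1/2} for all t > 0 and all x, y ∈ (0,∞). -/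
open MeasureTheory Real Set

/-!
With `z = xy/(2t)` the kernel factors as `e^{-(x-y)²/4t} (2t)^{-1/2} · √z e^{-z} I_ν(z)`, so the
heart of the matter is `√z e^{-z} I_ν(z) ≲ (z/(1+z))^{ν+1/2}`. Legendre's duplication formula
and the log-convexity of `Γ` bound the `k`-th term of `I_ν(z)` by a multiple of
`(z/2)^ν z^{2k} / ((2k)! (2k+1)^{ν+1/2})`; the resulting series is `e^z` times a Poisson average
of `(N+1)^{-(ν+1/2)}`, which is `O((1+z)^{-(ν+1/2)})`. Finally
`(1+√t/x)(1+√t/y) ≤ 2(1+t/(xy))(1+|x-y|/√t)`, and the polynomial factor in `|x-y|/√t` is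
absorbed by halving the Gaussian exponent.
-/

open scoped Nat

lemma rpow_le_one_add_pow {x s : ℝ} {m : ℕ} (hx : 0 ≤ x) (hs : 0 ≤ s) (hsm : s ≤ m) :
    x ^ s ≤ 1 + x ^ m := by
  rcases le_total x 1 with h | h
  · linarith [rpow_le_one hx h hs, pow_nonneg hx m]
  · rw [← rpow_natCast]
    linarith [rpow_le_rpow_of_exponent_le h hsm]

lemma Nat.factorial_add_le_factorial_mul_factorial_mul_pow (n m : ℕ) :
    (n + m)! ≤ n ! * m ! * (n + 1) ^ m := by
  rw [← Nat.factorial_mul_ascFactorial, mul_assoc]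
  exact Nat.mul_le_mul_left _ (Nat.ascFactorial_le_factorial_mul_pow _ _)

/- The weight `(n+1)^{-m}` is traded for the shift `n ↦ n + m` of the exponential series: this is
why the Poisson average of `(N+1)^{-s}` decays like `(1+z)^{-s}`. -/
lemma pow_div_factorial_div_rpow_mul_le {z s : ℝ} {m : ℕ} (hz : 0 ≤ z) (hs : 0 ≤ s)
    (hsm : s ≤ m) (n : ℕ) :
    z ^ n / n ! / (n + 1) ^ s * (1 + z) ^ s ≤
      2 ^ (m + 1) * m ! * (z ^ n / n ! + z ^ (n + m) / (n + m)!) := by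
  have hn : (1 : ℝ) ≤ n + 1 := by linarith [n.cast_nonneg (α := ℝ)]
  have hm : (1 : ℝ) ≤ m ! := mod_cast Nat.one_le_iff_ne_zero.mpr (Nat.factorial_ne_zero m)
  have hratio : ((1 + z) / (n + 1)) ^ s ≤ 1 + 2 ^ m * (1 + z ^ m) / (n + 1) ^ m := by
    have h2 : (1 + z) ^ m ≤ 2 ^ m * (1 + z ^ m) :=
      calc (1 + z) ^ m ≤ 2 ^ (m - 1) * (1 ^ m + z ^ m) := add_pow_le zero_le_one hz m
        _ ≤ 2 ^ m * (1 + z ^ m) := by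
          rw [one_pow]
          gcongr
          · exact one_le_two
          · exact Nat.sub_le m 1
    calc ((1 + z) / (n + 1)) ^ s ≤ 1 + ((1 + z) / (n + 1)) ^ m :=
          rpow_le_one_add_pow (by positivity) hs hsm
      _ ≤ _ := by rw [div_pow]; gcongr
  have hshift : z ^ n / n ! * z ^ m / (n + 1) ^ m ≤ m ! * (z ^ (n + m) / (n + m)!) := by
    have h : ((n + m)! : ℝ) ≤ n ! * m ! * (n + 1) ^ m :=
      mod_cast Nat.factorial_add_le_factorial_mul_factorial_mul_pow n m
    rw [show z ^ n / n ! * z ^ m / (n + 1) ^ m = z ^ (n + m) / (n ! * (n + 1) ^ m) by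
      rw [pow_add]; ring, mul_div_assoc', div_le_div_iff₀ (by positivity) (by positivity)]
    nlinarith [mul_le_mul_of_nonneg_left h (pow_nonneg hz (n + m))]
  have hdrop : z ^ n / n ! / (n + 1) ^ m ≤ z ^ n / n ! :=
    div_le_self (by positivity) (one_le_pow₀ hn)
  set e := z ^ n / (n ! : ℝ)
  have he : 0 ≤ e := by positivity
  have h2m : (1 : ℝ) ≤ 2 ^ m := one_le_pow₀ one_le_two
  calc e / (n + 1) ^ s * (1 + z) ^ s = e * ((1 + z) / (n + 1)) ^ s := by
        rw [div_rpow (by positivity) (by positivity)]; ring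
    _ ≤ e * (1 + 2 ^ m * (1 + z ^ m) / (n + 1) ^ m) := by gcongr
    _ = e + 2 ^ m * (e / (n + 1) ^ m) + 2 ^ m * (e * z ^ m / (n + 1) ^ m) := by ring
    _ ≤ e + 2 ^ m * e + 2 ^ m * (m ! * (z ^ (n + m) / (n + m)!)) := by gcongr
    _ ≤ 2 ^ (m + 1) * m ! * (e + z ^ (n + m) / (n + m)!) := by
        have h1 : e ≤ 2 ^ m * e := le_mul_of_one_le_left he h2m
        have h2 : 2 ^ m * e ≤ 2 ^ m * m ! * e := by
          rw [mul_assoc]; gcongr; exact le_mul_of_one_le_left he hm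
        have h3 : 0 ≤ 2 ^ m * (m ! * (z ^ (n + m) / (n + m)!)) := by positivity
        rw [pow_succ]
        linarith

lemma hasSum_pow_div_factorial_exp (z : ℝ) : HasSum (fun n : ℕ => z ^ n / n !) (exp z) := by
  rw [exp_eq_exp_ℝ]
  exact NormedSpace.expSeries_div_hasSum_exp z

lemma summable_pow_div_factorial_div_rpow {z s : ℝ} (hz : 0 ≤ z) (hs : 0 ≤ s) :
    Summable (fun n : ℕ => z ^ n / n ! / (n + 1) ^ s) :=
  (Real.summable_pow_div_factorial z).of_nonneg_of_le (fun n => by positivity)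
    fun n => div_le_self (by positivity) (one_le_rpow (by linarith [n.cast_nonneg (α := ℝ)]) hs)

lemma tsum_pow_div_factorial_div_rpow_mul_le {s : ℝ} (hs : 0 ≤ s) :
    ∃ B > 0, ∀ z : ℝ, 0 ≤ z →
      (∑' n : ℕ, z ^ n / n ! / (n + 1) ^ s) * (1 + z) ^ s ≤ B * exp z := by
  obtain ⟨m, hsm⟩ := exists_nat_ge s
  refine ⟨2 ^ (m + 2) * m !, by positivity, fun z hz => ?_⟩
  have hexp := hasSum_pow_div_factorial_exp z
  have hshifted : Summable (fun n : ℕ => z ^ (n + m) / (n + m)!) :=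
    (summable_nat_add_iff m).mpr hexp.summable
  have hshift : ∑' n : ℕ, z ^ (n + m) / (n + m)! ≤ exp z :=
    hexp.tsum_eq ▸ tsum_comp_le_tsum_of_inj hexp.summable (fun n => by positivity)
      (add_left_injective m)
  calc (∑' n : ℕ, z ^ n / n ! / (n + 1) ^ s) * (1 + z) ^ s
      = ∑' n : ℕ, z ^ n / n ! / (n + 1) ^ s * (1 + z) ^ s := tsum_mul_right.symm
    _ ≤ ∑' n : ℕ, 2 ^ (m + 1) * m ! * (z ^ n / n ! + z ^ (n + m) / (n + m)!) :=
        ((summable_pow_div_factorial_div_rpow hz hs).mul_right _).tsum_le_tsum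
          (pow_div_factorial_div_rpow_mul_le hz hs hsm) ((hexp.summable.add hshifted).mul_left _)
    _ = 2 ^ (m + 1) * m ! * (exp z + ∑' n : ℕ, z ^ (n + m) / (n + m)!) := by
        rw [tsum_mul_left, hexp.summable.tsum_add hshifted, hexp.tsum_eq]
    _ ≤ 2 ^ (m + 1) * m ! * (exp z + exp z) := by gcongr
    _ = 2 ^ (m + 2) * m ! * exp z := by ring

lemma Gamma_add_one_mul_rpow_le {y x : ℝ} (hy : 0 < y) (hx : 0 ≤ x) :
    Gamma (y + 1) * y ^ x ≤ Gamma (y + 1 + x) := by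
  rcases hx.eq_or_lt with rfl | hx
  · simp
  -- the slope of `log ∘ Gamma` on `[y, y + 1]` is `log y`
  have hslope := convexOn_log_Gamma.slope_mono_adjacent (mem_Ioi.mpr hy)
    (mem_Ioi.mpr (by linarith : 0 < y + 1 + x)) (by linarith : y < y + 1) (by linarith)
  have hfeq : log (Gamma (y + 1)) = log y + log (Gamma y) := by
    rw [Gamma_add_one hy.ne', log_mul hy.ne' (Gamma_pos_of_pos hy).ne']
  simp only [Function.comp_apply, add_sub_cancel_left, div_one, hfeq] at hslope
  rw [le_div_iff₀ hx] at hslope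
  calc Gamma (y + 1) * y ^ x = exp (log (Gamma (y + 1)) + log y * x) := by
        rw [exp_add, exp_log (Gamma_pos_of_pos (by linarith)), rpow_def_of_pos hy]
    _ ≤ exp (log (Gamma (y + 1 + x))) := exp_le_exp.mpr (by rw [hfeq]; linarith)
    _ = Gamma (y + 1 + x) := exp_log (Gamma_pos_of_pos (by linarith))

lemma Gamma_mul_rpow_le_mul_Gamma_add {y s : ℝ} (hy : 1 / 2 ≤ y) (hs : 0 ≤ s) :
    Gamma y * y ^ s ≤ (1 + 2 * s) * Gamma (y + s) := by
  have hy0 : 0 < y := by linarith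
  have h := Gamma_add_one_mul_rpow_le hy0 hs
  rw [Gamma_add_one hy0.ne', add_right_comm, Gamma_add_one (by linarith)] at h
  have hG : 0 ≤ Gamma (y + s) := (Gamma_pos_of_pos (by linarith)).le
  have : y * (Gamma y * y ^ s) ≤ y * ((1 + 2 * s) * Gamma (y + s)) := by
    nlinarith [mul_le_mul_of_nonneg_right (by nlinarith : y + s ≤ (1 + 2 * s) * y) hG]
  exact le_of_mul_le_mul_left this hy0

lemma factorial_mul_Gamma_add_half (k : ℕ) :
    k ! * Gamma (k + 1 / 2) = √π * (2 * k)! / 4 ^ k := by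
  have h := Gamma_mul_Gamma_add_half (k + 1 / 2)
  rw [show (k : ℝ) + 1 / 2 + 1 / 2 = k + 1 by ring,
    show 2 * ((k : ℝ) + 1 / 2) = (2 * k : ℕ) + 1 by push_cast; ring,
    Gamma_nat_eq_factorial, Gamma_nat_eq_factorial] at h
  have h4 : (2 : ℝ) ^ (1 - (((2 * k : ℕ) : ℝ) + 1)) = (4 ^ k)⁻¹ := by
    rw [show 1 - (((2 * k : ℕ) : ℝ) + 1) = -((2 * k : ℕ) : ℝ) by ring, rpow_neg zero_le_two,
      rpow_natCast, pow_mul]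
    norm_num
  rw [mul_comm, h, h4]
  field_simp

lemma besselI_term_le {ν z : ℝ} (hν : -1 / 2 < ν) (hz : 0 < z) (k : ℕ) :
    (z / 2) ^ (ν + 2 * (k : ℝ)) / (k ! * Gamma (ν + k + 1)) ≤
      (1 + 2 * (ν + 1 / 2)) * 2 ^ (ν + 1 / 2) / √π * (z / 2) ^ ν *
        (z ^ (2 * k) / (2 * k)! / (((2 * k : ℕ) : ℝ) + 1) ^ (ν + 1 / 2)) := by
  set s := ν + 1 / 2 with hs_def
  have hs : 0 ≤ s := by linarith
  have hΓ : √π * (2 * k)! / 4 ^ k * (((2 * k : ℕ) : ℝ) + 1) ^ s / 2 ^ s / (1 + 2 * s) ≤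
      k ! * Gamma (ν + k + 1) := by
    have h := Gamma_mul_rpow_le_mul_Gamma_add (y := k + 1 / 2)
      (by linarith [k.cast_nonneg (α := ℝ)]) hs
    rw [show (k : ℝ) + 1 / 2 + s = ν + k + 1 by ring] at h
    have hk := mul_le_mul_of_nonneg_left h (Nat.cast_nonneg k ! : (0 : ℝ) ≤ k !)
    rw [← mul_assoc, factorial_mul_Gamma_add_half,
      show (k : ℝ) + 1 / 2 = (((2 * k : ℕ) : ℝ) + 1) / 2 by push_cast; ring,
      div_rpow (by positivity) zero_le_two] at hk
    rw [div_le_iff₀ (by positivity)]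
    convert hk using 1 <;> ring
  have hnum : (z / 2) ^ (ν + 2 * (k : ℝ)) = (z / 2) ^ ν * (z ^ (2 * k) / 4 ^ k) := by
    rw [rpow_add (by positivity), show 2 * (k : ℝ) = ((2 * k : ℕ) : ℝ) by push_cast; ring,
      rpow_natCast, div_pow, pow_mul 2 2 k]
    norm_num
  have hΓpos : 0 < Gamma (ν + k + 1) := Gamma_pos_of_pos (by linarith [k.cast_nonneg (α := ℝ)])
  have hπ : 0 < √π := sqrt_pos.mpr pi_pos
  rw [hnum, div_le_iff₀ (by positivity)]
  calc (z / 2) ^ ν * (z ^ (2 * k) / 4 ^ k)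
      = (1 + 2 * s) * 2 ^ s / √π * (z / 2) ^ ν *
          (z ^ (2 * k) / (2 * k)! / (((2 * k : ℕ) : ℝ) + 1) ^ s) *
          (√π * (2 * k)! / 4 ^ k * (((2 * k : ℕ) : ℝ) + 1) ^ s / 2 ^ s / (1 + 2 * s)) := by
        field_simp
    _ ≤ _ := by gcongr

lemma sqrt_mul_exp_neg_mul_besselI_le {ν : ℝ} (hν : -1 / 2 < ν) :
    ∃ C > 0, ∀ z : ℝ, 0 < z →
      √z * exp (-z) * besselI ν z ≤ C * (z / (1 + z)) ^ (ν + 1 / 2) := by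
  set s := ν + 1 / 2 with hs_def
  have hs : 0 ≤ s := by linarith
  obtain ⟨B, hB, hsum⟩ := tsum_pow_div_factorial_div_rpow_mul_le hs
  set A := (1 + 2 * s) * 2 ^ s / √π
  have hA : 0 < A := by have := sqrt_pos.mpr pi_pos; positivity
  refine ⟨A * B / 2 ^ ν, by positivity, fun z hz => ?_⟩
  set g : ℕ → ℝ := fun n => z ^ n / n ! / (n + 1) ^ s
  have hg : Summable g := summable_pow_div_factorial_div_rpow hz.le hs
  have hg0 (n : ℕ) : 0 ≤ g n := by positivity
  have heven : Summable (fun k : ℕ => A * (z / 2) ^ ν * g (2 * k)) :=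
    (hg.comp_injective (mul_right_injective₀ two_ne_zero)).mul_left _
  have hterm0 (k : ℕ) : 0 ≤ (z / 2) ^ (ν + 2 * (k : ℝ)) / (k ! * Gamma (ν + k + 1)) :=
    div_nonneg (by positivity)
      (mul_nonneg (by positivity) (Gamma_pos_of_pos (by linarith [k.cast_nonneg (α := ℝ)])).le)
  have hI : besselI ν z ≤ A * (z / 2) ^ ν * ∑' n, g n :=
    calc besselI ν z ≤ ∑' k : ℕ, A * (z / 2) ^ ν * g (2 * k) :=
          (heven.of_nonneg_of_le hterm0 (besselI_term_le hν hz)).tsum_le_tsum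
            (besselI_term_le hν hz) heven
      _ = A * (z / 2) ^ ν * ∑' k : ℕ, g (2 * k) := tsum_mul_left
      _ ≤ A * (z / 2) ^ ν * ∑' n, g n := mul_le_mul_of_nonneg_left
          (tsum_comp_le_tsum_of_inj hg hg0 (mul_right_injective₀ two_ne_zero)) (by positivity)
  have hT : ∑' n, g n ≤ B * exp z / (1 + z) ^ s := by
    rw [le_div_iff₀ (by positivity)]
    exact hsum z hz.le
  have hpow : √z * (z / 2) ^ ν = z ^ s / 2 ^ ν := by
    rw [div_rpow hz.le zero_le_two, sqrt_eq_rpow, mul_div_assoc', ← rpow_add hz, hs_def, add_comm]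
  calc √z * exp (-z) * besselI ν z ≤ √z * exp (-z) * (A * (z / 2) ^ ν * ∑' n, g n) := by gcongr
    _ = A / 2 ^ ν * z ^ s * exp (-z) * ∑' n, g n := by
        linear_combination (A * exp (-z) * ∑' n, g n) * hpow
    _ ≤ A / 2 ^ ν * z ^ s * exp (-z) * (B * exp z / (1 + z) ^ s) := by gcongr
    _ = A * B / 2 ^ ν * (z / (1 + z)) ^ s := by
        rw [div_rpow hz.le (by positivity), exp_neg]
        field_simp

lemma heatK_eq {t : ℝ} (ht : 0 < t) (ν x y : ℝ) :
    heatK ν t x y = exp (-(x - y) ^ 2 / (4 * t)) / √(2 * t) *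
      (√(x * y / (2 * t)) * exp (-(x * y / (2 * t))) * besselI ν (x * y / (2 * t))) := by
  have hexp : exp (-(x ^ 2 + y ^ 2) / (4 * t)) =
      exp (-(x - y) ^ 2 / (4 * t)) * exp (-(x * y / (2 * t))) := by
    rw [← exp_add]; congr 1; field_simp; ring
  have h2t : 0 < √(2 * t) := sqrt_pos.mpr (by positivity)
  rw [heatK, sqrt_div' _ (by positivity : (0 : ℝ) ≤ 2 * t), hexp]
  field_simp
  rw [sq_sqrt (by positivity)]
  ring

lemma one_add_div_mul_one_add_div_le {x y r : ℝ} (hx : 0 < x) (hy : 0 < y) (hr : 0 < r) :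
    (1 + r / x) * (1 + r / y) ≤ 2 * (1 + r ^ 2 / (x * y)) * (1 + |x - y| / r) := by
  wlog hxy : x ≤ y generalizing x y
  · have := this hy hx (le_of_not_ge hxy)
    rwa [abs_sub_comm, mul_comm y x, mul_comm (1 + r / y)] at this
  have hd : 0 ≤ y - x := sub_nonneg.mpr hxy
  have key : r * ((x + r) * (y + r)) ≤ 2 * (x * y + r ^ 2) * (r + (y - x)) := by
    nlinarith [mul_nonneg hr.le (sq_nonneg (x - r)), mul_nonneg (mul_nonneg hr.le hx.le) hd,
      mul_nonneg (sq_nonneg r) hd, mul_nonneg (mul_nonneg hx.le hy.le) hd]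
  calc (1 + r / x) * (1 + r / y) = r * ((x + r) * (y + r)) / (x * y * r) := by field_simp
    _ ≤ 2 * (x * y + r ^ 2) * (r + (y - x)) / (x * y * r) := by gcongr
    _ = 2 * (1 + r ^ 2 / (x * y)) * (1 + |x - y| / r) := by
        rw [abs_of_nonpos (by linarith : x - y ≤ 0)]; field_simp; ring

lemma div_one_add_rpow_le {t x y s : ℝ} (ht : 0 < t) (hx : 0 < x) (hy : 0 < y) (hs : 0 ≤ s) :
    (x * y / (2 * t) / (1 + x * y / (2 * t))) ^ s ≤
      2 ^ s * (1 + |x - y| / √t) ^ s * (1 + √t / x) ^ (-s) * (1 + √t / y) ^ (-s) := by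
  have hprod := one_add_div_mul_one_add_div_le hx hy (sqrt_pos.mpr ht)
  rw [sq_sqrt ht.le] at hprod
  set u := |x - y| / √t
  have hratio : x * y / (2 * t) / (1 + x * y / (2 * t)) ≤
      2 * (1 + u) / ((1 + √t / x) * (1 + √t / y)) := by
    rw [le_div_iff₀ (by positivity)]
    calc _ ≤ x * y / (2 * t) / (1 + x * y / (2 * t)) * (2 * (1 + t / (x * y)) * (1 + u)) := by
          gcongr
      _ = (x * y + t) / (x * y + 2 * t) * (2 * (1 + u)) := by field_simp; ring
      _ ≤ 2 * (1 + u) :=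
          mul_le_of_le_one_left (by positivity) ((div_le_one (by positivity)).mpr (by linarith))
  calc _ ≤ (2 * (1 + u) / ((1 + √t / x) * (1 + √t / y))) ^ s := by gcongr
    _ = _ := by
        rw [div_rpow (by positivity) (by positivity), mul_rpow (by positivity) (by positivity),
          mul_rpow (by positivity) (by positivity), rpow_neg (by positivity),
          rpow_neg (by positivity)]
        ring

lemma one_add_rpow_mul_exp_le {t s : ℝ} (ht : 0 < t) (hs : 0 ≤ s) (x y : ℝ) :
    (1 + |x - y| / √t) ^ s * exp (-(x - y) ^ 2 / (4 * t)) ≤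
      exp (2 * s ^ 2) * exp (-(x - y) ^ 2 / (8 * t)) := by
  set u := |x - y| / √t
  have hu2 : (x - y) ^ 2 / t = u ^ 2 := by rw [div_pow, sq_abs, sq_sqrt ht.le]
  have h4 : -(x - y) ^ 2 / (4 * t) = -(u ^ 2 / 4) := by rw [← hu2]; ring
  have h8 : -(x - y) ^ 2 / (8 * t) = -(u ^ 2 / 8) := by rw [← hu2]; ring
  rw [h4, h8, ← exp_add]
  calc (1 + u) ^ s * exp (-(u ^ 2 / 4)) ≤ exp u ^ s * exp (-(u ^ 2 / 4)) := by
        gcongr; linarith [add_one_le_exp u]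
    _ = exp (u * s + -(u ^ 2 / 4)) := by rw [← exp_mul, exp_add]
    _ ≤ exp (2 * s ^ 2 + -(u ^ 2 / 8)) := exp_le_exp.mpr (by nlinarith [sq_nonneg (u - 4 * s)])

/-- Gaussian upper bound with boundary decay factors for the Bessel heat kernel. -/
theorem bessel_heat_upper_bound (ν : ℝ) (hν : -1 / 2 < ν) :
    ∃ C > 0, ∃ c > 0, ∀ t > 0, ∀ x > 0, ∀ y > 0,
      heatK ν t x y ≤
        C * t ^ (-(1 : ℝ) / 2) * Real.exp (-(x - y) ^ 2 / (c * t)) *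
          (1 + Real.sqrt t / x) ^ (-(ν + 1 / 2)) * (1 + Real.sqrt t / y) ^ (-(ν + 1 / 2)) := by
  obtain ⟨C, hC, hbessel⟩ := sqrt_mul_exp_neg_mul_besselI_le hν
  set s := ν + 1 / 2 with hs_def
  have hs : 0 ≤ s := by linarith
  refine ⟨C * 2 ^ s * exp (2 * s ^ 2) / √2, by positivity, 8, by norm_num,
    fun t ht x hx y hy => ?_⟩
  set u := |x - y| / √t
  set P := (1 + √t / x) ^ (-s)
  set Q := (1 + √t / y) ^ (-s)
  have hrt : t ^ (-(1 : ℝ) / 2) = (√t)⁻¹ := by rw [sqrt_eq_rpow, ← rpow_neg ht.le, neg_div]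
  rw [heatK_eq ht]
  calc _ ≤ exp (-(x - y) ^ 2 / (4 * t)) / √(2 * t) *
        (C * (x * y / (2 * t) / (1 + x * y / (2 * t))) ^ s) :=
        mul_le_mul_of_nonneg_left (hbessel _ (by positivity)) (by positivity)
    _ ≤ exp (-(x - y) ^ 2 / (4 * t)) / √(2 * t) * (C * (2 ^ s * (1 + u) ^ s * P * Q)) := by
        gcongr; exact div_one_add_rpow_le ht hx hy hs
    _ = C * 2 ^ s / √2 * t ^ (-(1 : ℝ) / 2) *
        ((1 + u) ^ s * exp (-(x - y) ^ 2 / (4 * t))) * P * Q := by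
        rw [hrt, sqrt_mul zero_le_two]; ring
    _ ≤ C * 2 ^ s / √2 * t ^ (-(1 : ℝ) / 2) *
        (exp (2 * s ^ 2) * exp (-(x - y) ^ 2 / (8 * t))) * P * Q := by
        gcongr _ * ?_ * _ * _
        exact one_add_rpow_mul_exp_le ht hs x y
    _ = _ := by ring
end
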